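/- arXiv:1110.6126 — 4 statements merged into one kernel-verified Lean document; each statement's English description precedes it below -/
import Mathlib

section
/- Let D^inv ∘ D denote the composite random procedure that draws X from the uniform distribution U on [M]^N, then draws Z from D(X), and then draws W from D^inv(Z) (note every Z in the support of D(X) is non-surjective, so D^inv(Z) is well-defined). Then the resulting distribution of W is exactly the uniform distribution U on [M]^N. -/
/-!
Under `U` followed by `D`, a string `Z` arises from exactly the colours `y ∉ Im(Z)`, each with
probability `1 / (M (M-1)^N)`, so it has mass `|Im(Z)ᶜ| / (M (M-1)^N)`. `D^inv` draws its colour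
uniformly from the same `|Im(Z)ᶜ|` values, so the pair `(y, Z)` it acts on is distributed as:
`y` uniform on `[M]`, `Z` uniform on `([M] ∖ {y})^N`. Coordinatewise, a uniform element of
`[M] ∖ {y}` that is replaced by `y` with probability `1/M` is uniform on `[M]`, hence `W` is
uniform.
-/

namespace GLN

noncomputable section

open Finset

/-- `M = 2^m`. -/
def MM (m : ℕ) : ℕ := 2 ^ m

/-- `N = ⌈M · m · ln 2⌉`. -/
def NN (m : ℕ) : ℕ := ⌈(MM m : ℝ) * m * Real.log 2⌉₊

/-- Strings `X ∈ [M]^N`. -/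
abbrev Str (m : ℕ) := Fin (NN m) → Fin (MM m)

/-- The uniform probability mass function on `[M]^N`. -/
def umass (m : ℕ) (_X : Str m) : ℝ := 1 / (MM m : ℝ) ^ NN m

/-- The image `Im(X) ⊆ [M]` of a string, as a finset. -/
def img {m : ℕ} (X : Str m) : Finset (Fin (MM m)) := Finset.image X Finset.univ

/-- Transition kernel of `D_y(X)`: each coordinate with `x_i = y` is replaced by a uniform
independent sample from `[M] \ {y}`; other coordinates are unchanged. -/
def kerDy (m : ℕ) (y : Fin (MM m)) (X Z : Str m) : ℝ :=
  ∏ i, if X i = y then (if Z i = y then 0 else 1 / ((MM m : ℝ) - 1))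
       else (if Z i = X i then 1 else 0)

/-- Transition kernel of `D(X)`: choose `y` uniformly in `[M]`, then apply `D_y`. -/
def kerD (m : ℕ) (X Z : Str m) : ℝ := (1 / (MM m : ℝ)) * ∑ y, kerDy m y X Z

/-- The probability mass function of the distribution `D = D(U)`. -/
def dmass (m : ℕ) (Z : Str m) : ℝ := ∑ X, umass m X * kerD m X Z

/-- Transition kernel of `D_y^inv(Z)`: each coordinate is independently replaced by `y`
with probability `1/M` and left unchanged otherwise. -/
def kerDinvy (m : ℕ) (y : Fin (MM m)) (Z W : Str m) : ℝ :=
  ∏ i, ((1 / (MM m : ℝ)) * (if W i = y then 1 else 0)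
        + (1 - 1 / (MM m : ℝ)) * (if W i = Z i then 1 else 0))

/-- Transition kernel of `D^inv(Z)`: choose `y` uniformly in `[M] \ Im(Z)`,
then apply `D_y^inv`. -/
def kerDinv (m : ℕ) (Z W : Str m) : ℝ :=
  (1 / (((img Z)ᶜ.card : ℝ))) * ∑ y ∈ (img Z)ᶜ, kerDinvy m y Z W

/-- Probability of an event under a mass function. -/
def pr {m : ℕ} (μ : Str m → ℝ) (E : Set (Str m)) : ℝ := ∑ X, E.indicator μ X

/-- Expectation of a real function under a mass function. -/
def ev {m : ℕ} (μ : Str m → ℝ) (g : Str m → ℝ) : ℝ := ∑ X, μ X * g X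

/-- The surjectivity function `f_Surj`. -/
def fSurjB (m : ℕ) (X : Str m) : Bool := decide (img X = Finset.univ)

/-- The `q.2`-th bit of the binary encoding of coordinate `x_{q.1}` of `X`;
this realizes `X` as a string of `n = N·m` bits. -/
def bit {m : ℕ} (X : Str m) (q : Fin (NN m) × Fin m) : Bool :=
  Nat.testBit (X q.1).val q.2.val

def coordKerD {M : ℕ} (y x z : Fin M) : ℝ :=
  if x = y then (if z = y then 0 else 1 / ((M : ℝ) - 1)) else (if z = x then 1 else 0)

def coordKerDinv {M : ℕ} (y z w : Fin M) : ℝ :=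
  (1 / (M : ℝ)) * (if w = y then 1 else 0) + (1 - 1 / (M : ℝ)) * (if w = z then 1 else 0)

lemma kerDy_eq_prod (m : ℕ) (y : Fin (MM m)) (X Z : Str m) :
    kerDy m y X Z = ∏ i, coordKerD y (X i) (Z i) := rfl

lemma kerDinvy_eq_prod (m : ℕ) (y : Fin (MM m)) (Z W : Str m) :
    kerDinvy m y Z W = ∏ i, coordKerDinv y (Z i) (W i) := rfl

lemma sum_coordKerD {M : ℕ} (y z : Fin M) :
    ∑ x, coordKerD y x z = if z = y then 0 else (M : ℝ) / ((M : ℝ) - 1) := by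
  unfold coordKerD
  by_cases hzy : z = y
  · subst hzy
    simp +contextual [eq_comm]
  · have hM : (M : ℝ) - 1 ≠ 0 := by
      have : 1 < M := Fintype.card_fin M ▸ Fintype.one_lt_card_iff.mpr ⟨z, y, hzy⟩
      rw [sub_ne_zero]
      exact_mod_cast this.ne'
    rw [sum_eq_add y z (Ne.symm hzy) (by grind) (by simp) (by simp)]
    simp only [if_true, if_neg hzy]
    field_simp
    ring

lemma sum_compl_coordKerDinv {M : ℕ} (y w : Fin M) :
    ∑ z ∈ {y}ᶜ, coordKerDinv y z w = ((M : ℝ) - 1) / M := by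
  have hM : 1 ≤ M := Fin.pos y
  have hM₀ : (M : ℝ) ≠ 0 := by positivity
  unfold coordKerDinv
  rw [sum_add_distrib, sum_const, card_compl, Fintype.card_fin,
    card_singleton, nsmul_eq_mul, ← mul_sum, sum_ite_eq, Nat.cast_sub hM]
  by_cases hwy : w = y <;> simp [hwy] <;> field_simp

lemma one_lt_MM {m : ℕ} (hm : 1 ≤ m) : 1 < MM m :=
  Nat.one_lt_two_pow (by omega)

lemma MM_cast_ne_zero (m : ℕ) : (MM m : ℝ) ≠ 0 := by
  simp [MM]

lemma notMem_img_iff_mem_piFinset {m : ℕ} {y : Fin (MM m)} {Z : Str m} :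
    y ∉ img Z ↔ Z ∈ Fintype.piFinset fun _ => ({y}ᶜ : Finset (Fin (MM m))) := by
  simp [img, Fintype.mem_piFinset]

lemma sum_kerDy (m : ℕ) (y : Fin (MM m)) (Z : Str m) :
    ∑ X, kerDy m y X Z =
      if y ∈ img Z then 0 else ((MM m : ℝ) / ((MM m : ℝ) - 1)) ^ NN m := by
  simp only [kerDy_eq_prod]
  rw [← Fintype.prod_sum fun i x => coordKerD y x (Z i)]
  simp only [sum_coordKerD]
  split_ifs with hy
  · obtain ⟨i, -, hi⟩ := mem_image.mp hy
    exact prod_eq_zero (mem_univ i) (if_pos hi)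
  · rw [notMem_img_iff_mem_piFinset, Fintype.mem_piFinset] at hy
    simp_all [div_pow]

lemma dmass_eq (m : ℕ) (Z : Str m) :
    dmass m Z = (img Z)ᶜ.card / ((MM m : ℝ) * ((MM m : ℝ) - 1) ^ NN m) := by
  have hM := MM_cast_ne_zero m
  simp only [dmass, umass, kerD, ← mul_sum]
  rw [sum_comm]
  simp only [sum_kerDy, sum_ite, sum_const_zero, sum_const, zero_add,
    nsmul_eq_mul, filter_notMem_eq_sdiff, ← compl_eq_univ_sdiff, div_pow]
  field_simp

lemma dmass_mul_kerDinv (m : ℕ) (Z W : Str m) :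
    dmass m Z * kerDinv m Z W =
      (∑ y ∈ (img Z)ᶜ, kerDinvy m y Z W) / ((MM m : ℝ) * ((MM m : ℝ) - 1) ^ NN m) := by
  rw [dmass_eq, kerDinv]
  rcases ((img Z)ᶜ).eq_empty_or_nonempty with hZ | hZ
  · simp [hZ]
  · have : ((img Z)ᶜ.card : ℝ) ≠ 0 := by exact_mod_cast hZ.card_pos.ne'
    field_simp

lemma sum_kerDinvy (m : ℕ) (y : Fin (MM m)) (W : Str m) :
    ∑ Z ∈ Fintype.piFinset (fun _ => {y}ᶜ), kerDinvy m y Z W =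
      (((MM m : ℝ) - 1) / MM m) ^ NN m := by
  simp only [kerDinvy_eq_prod]
  rw [sum_prod_piFinset _ fun i z => coordKerDinv y z (W i)]
  simp [sum_compl_coordKerDinv, div_pow]

/-- drawing `X ∼ U`, then `Z ∼ D(X)`, then `W ∼ D^inv(Z)` yields exactly the
uniform distribution: the composite mass at every `W` equals the uniform mass. -/
theorem stmt0 (m : ℕ) (hm : 1 ≤ m) (W : Str m) :
    ∑ Z : Str m, dmass m Z * kerDinv m Z W = umass m W := by
  have hM := MM_cast_ne_zero m
  have hM₁ : (MM m : ℝ) - 1 ≠ 0 := sub_ne_zero.mpr (by exact_mod_cast (one_lt_MM hm).ne')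
  calc ∑ Z : Str m, dmass m Z * kerDinv m Z W
      = (∑ Z : Str m, ∑ y ∈ (img Z)ᶜ, kerDinvy m y Z W) /
          ((MM m : ℝ) * ((MM m : ℝ) - 1) ^ NN m) := by
        simp only [dmass_mul_kerDinv, sum_div]
    _ = (∑ y, ∑ Z ∈ Fintype.piFinset (fun _ => {y}ᶜ), kerDinvy m y Z W) /
          ((MM m : ℝ) * ((MM m : ℝ) - 1) ^ NN m) := by
        rw [sum_comm' (t' := univ) (s' := fun y => Fintype.piFinset fun _ => {y}ᶜ)
          fun Z y => by simp [notMem_img_iff_mem_piFinset]]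
    _ = umass m W := by
        simp only [sum_kerDinvy, sum_const, card_univ, Fintype.card_fin,
          nsmul_eq_mul, umass, div_pow]
        field_simp

end
end GLN
end

section
/- Every string Z in the support of D satisfies f_Surj(Z) = 0 (i.e., Pr_{Z∼D}[f_Surj(Z)=1] = 0), and for every ε > 0 there exists m_0 such that for all m ≥ m_0, Pr_{X∼U}[f_Surj(X)=1] ≥ 1/e − ε. Consequently, for all m ≥ m_0, Pr_{X∼U}[f_Surj(X)=1] − Pr_{Z∼D}[f_Surj(Z)=1] ≥ 1/e − ε. -/
/-!
A string drawn from `D` misses the symbol `y` chosen in its construction, so `D` gives the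
surjective strings mass zero.

For the uniform distribution, count the strings missing a fixed `k`-set of symbols and truncate
inclusion–exclusion after an odd number of terms (Bonferroni):
`Pr_U[Surj] ≥ ∑_{k ≤ r} (-1)^k C(M,k) (1 - k/M)^N`. Since `N = M log M + O(1)`, we have
`(1 - k/M)^N ~ M^{-k}` and `C(M,k) ~ M^k / k!`, so the `k`-th term tends to `(-1)^k / k!` and the
bound tends to a partial sum of the series of `e^{-1}`.
-/

namespace GLN

noncomputable section

open Finset

open Filter Real Topology
open scoped Nat

section Surjections

variable {α β : Type*} [Fintype α] [DecidableEq α] [Fintype β] [DecidableEq β]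

theorem sum_range_neg_one_pow_mul_choose_le {t r : ℕ} (hr : Odd r) :
    ∑ k ∈ range (r + 1), ((-1) ^ k * t.choose k : ℤ) ≤ if t = 0 then 1 else 0 := by
  cases t with
  | zero => simp [sum_range_succ']
  | succ t =>
    rw [Int.alternating_sum_range_choose_eq_choose, hr.neg_one_pow]
    simp

theorem sum_choose_card_compl_image (k : ℕ) :
    ∑ f : α → β, (#(univ.image f)ᶜ).choose k =
      (Fintype.card β).choose k * (Fintype.card β - k) ^ Fintype.card α := by
  have hmiss (S : Finset β) :
      #{f : α → β | S ⊆ (univ.image f)ᶜ} = (Fintype.card β - #S) ^ Fintype.card α := by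
    have : ({f : α → β | S ⊆ (univ.image f)ᶜ} : Finset _) =
        Fintype.piFinset fun _ ↦ Sᶜ := by
      ext f
      simp only [subset_iff, mem_compl, mem_image, mem_univ, true_and,
        Fintype.mem_piFinset, mem_filter]
      grind
    rw [this, Fintype.card_piFinset, prod_const, card_compl, card_univ]
  calc ∑ f : α → β, (#(univ.image f)ᶜ).choose k
      = ∑ f : α → β, ∑ S ∈ univ.powersetCard k,
          if S ⊆ (univ.image f)ᶜ then 1 else 0 := by
        refine sum_congr rfl fun f _ ↦ ?_
        rw [sum_boole, ← card_powersetCard, Nat.cast_id]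
        congr 1
        ext S
        simp [mem_powersetCard, and_comm]
    _ = ∑ S ∈ univ.powersetCard k, #{f : α → β | S ⊆ (univ.image f)ᶜ} := by
        rw [sum_comm]
        simp only [sum_boole, Nat.cast_id]
    _ = _ := by
        rw [sum_congr rfl fun S hS ↦ by rw [hmiss, (mem_powersetCard.mp hS).2], sum_const,
          card_powersetCard, card_univ, smul_eq_mul]

theorem sum_range_neg_one_pow_mul_choose_mul_pow_le_card {r : ℕ} (hr : Odd r) :
    ∑ k ∈ range (r + 1), (-1) ^ k *
        (((Fintype.card β).choose k * (Fintype.card β - k) ^ Fintype.card α : ℕ) : ℤ) ≤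
      #{f : α → β | univ.image f = univ} := by
  calc ∑ k ∈ range (r + 1), (-1) ^ k *
        (((Fintype.card β).choose k * (Fintype.card β - k) ^ Fintype.card α : ℕ) : ℤ)
      = ∑ f : α → β, ∑ k ∈ range (r + 1),
          ((-1) ^ k * (#(univ.image f)ᶜ).choose k : ℤ) := by
        simp_rw [← sum_choose_card_compl_image, Nat.cast_sum, mul_sum]
        exact sum_comm
    _ ≤ ∑ f : α → β, if #(univ.image f)ᶜ = 0 then 1 else 0 :=
        sum_le_sum fun f _ ↦ sum_range_neg_one_pow_mul_choose_le hr
    _ = #{f : α → β | univ.image f = univ} := by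
        simp [card_eq_zero, compl_eq_empty_iff]

end Surjections

section Asymptotics

theorem tendsto_choose_div_pow_atTop (k : ℕ) :
    Tendsto (fun n : ℕ ↦ (n.choose k : ℝ) / n ^ k) atTop (𝓝 (1 / k !)) := by
  have hratio : Tendsto (fun n : ℕ ↦ ((n + 1 - k : ℕ) : ℝ) / n) atTop (𝓝 1) := by
    have h := (tendsto_const_div_atTop_nhds_zero_nat (1 - k : ℝ)).const_add 1
    rw [add_zero] at h
    refine h.congr' ?_
    filter_upwards [eventually_ge_atTop k, eventually_gt_atTop 0] with n hkn hn
    rw [Nat.cast_sub (by omega)]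
    push_cast
    field_simp
    ring
  have hlow := (hratio.pow k).div_const (k ! : ℝ)
  rw [one_pow] at hlow
  refine tendsto_of_tendsto_of_tendsto_of_le_of_le' hlow tendsto_const_nhds ?_ ?_
  · filter_upwards [eventually_gt_atTop 0] with n hn
    rw [div_pow, div_div, mul_comm, ← div_div]
    exact div_le_div_of_nonneg_right (Nat.pow_le_choose k n) (by positivity)
  · filter_upwards [eventually_gt_atTop 0] with n hn
    rw [div_le_iff₀ (by positivity), div_mul_eq_mul_div, one_mul]
    exact Nat.choose_le_pow_div k n

theorem pow_mul_one_sub_div_pow_le_one {x : ℝ} {k N : ℕ} (hx : 0 < x) (hkx : k ≤ x)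
    (hN : x * log x ≤ N) : x ^ k * (1 - k / x) ^ N ≤ 1 := by
  have hbase : (1 - k / x) ^ N ≤ exp (-(k / x)) ^ N :=
    pow_le_pow_left₀ (by rw [sub_nonneg, div_le_one hx]; exact hkx)
      (by linarith [add_one_le_exp (-(k / x))]) N
  have hexp : exp (-(k / x)) ^ N ≤ exp (-(k * log x)) := by
    rw [← exp_nat_mul, exp_le_exp]
    have : k * log x = (x * log x) * (k / x) := by field_simp
    nlinarith [div_nonneg (Nat.cast_nonneg k) hx.le]
  calc x ^ k * (1 - k / x) ^ N ≤ x ^ k * exp (-(k * log x)) := by gcongr; exact hbase.trans hexp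
    _ = 1 := by rw [exp_neg, exp_nat_mul, exp_log hx, mul_inv_cancel₀ (by positivity)]

theorem exp_neg_le_pow_mul_one_sub_div_pow {x : ℝ} {k N : ℕ} (hkx : k < x)
    (hN : N ≤ x * log x + 1) :
    exp (-(k * (k * log x + 1) / (x - k))) ≤ x ^ k * (1 - k / x) ^ N := by
  have hx : 0 < x := (Nat.cast_nonneg k).trans_lt hkx
  have hxk : 0 < x - k := by linarith
  have hbase : 0 < 1 - k / x := by rw [sub_pos, div_lt_one hx]; exact hkx
  have hlog : -(k / (x - k)) ≤ log (1 - k / x) := by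
    have h := one_sub_inv_le_log_of_pos hbase
    have : 1 - (1 - k / x)⁻¹ = -(k / (x - k)) := by field_simp; ring
    linarith
  rw [← exp_log hbase, ← exp_nat_mul, ← exp_log hx, ← exp_nat_mul, ← exp_add, exp_log hx,
    exp_le_exp]
  have hNk : N * (k / (x - k)) ≤ (x * log x + 1) * (k / (x - k)) :=
    mul_le_mul_of_nonneg_right hN (by positivity)
  have : (x * log x + 1) * (k / (x - k)) = k * log x + k * (k * log x + 1) / (x - k) := by
    field_simp; ring
  nlinarith [mul_le_mul_of_nonneg_left hlog (Nat.cast_nonneg N)]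

theorem tendsto_mul_log_add_one_div_sub_atTop (k : ℝ) :
    Tendsto (fun x ↦ k * (k * log x + 1) / (x - k)) atTop (𝓝 0) := by
  have hlog := tendsto_pow_log_div_mul_add_atTop 1 (-k) 1 one_ne_zero
  have hinv := tendsto_inv_atTop_zero.comp (tendsto_atTop_add_const_right _ (-k) tendsto_id)
  have h := (hlog.const_mul (k * k)).add (hinv.const_mul k)
  rw [mul_zero, mul_zero, add_zero] at h
  refine h.congr' ?_
  filter_upwards [eventually_gt_atTop k] with x hx
  have : x - k ≠ 0 := by linarith
  simp only [Function.comp_apply, id, pow_one, one_mul, ← sub_eq_add_neg]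
  field_simp

theorem tendsto_pow_mul_one_sub_div_pow {ι : Type*} {l : Filter ι} {x : ι → ℝ}
    {N : ι → ℕ} (k : ℕ) (hx : Tendsto x l atTop) (hN_ge : ∀ i, x i * log (x i) ≤ N i)
    (hN_le : ∀ i, N i ≤ x i * log (x i) + 1) :
    Tendsto (fun i ↦ x i ^ k * (1 - k / x i) ^ N i) l (𝓝 1) := by
  have hlow := (continuous_exp.tendsto (-0)).comp
    ((tendsto_mul_log_add_one_div_sub_atTop k).comp hx).neg
  rw [neg_zero, exp_zero] at hlow
  have hk : ∀ᶠ i in l, (k : ℝ) < x i := hx.eventually_gt_atTop k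
  refine tendsto_of_tendsto_of_tendsto_of_le_of_le' hlow tendsto_const_nhds ?_ ?_
  · filter_upwards [hk] with i hi using exp_neg_le_pow_mul_one_sub_div_pow hi (hN_le i)
  · filter_upwards [hk] with i hi
    exact pow_mul_one_sub_div_pow_le_one ((Nat.cast_nonneg k).trans_lt hi) hi.le (hN_ge i)

theorem tendsto_choose_mul_one_sub_div_pow {ι : Type*} {l : Filter ι} {M N : ι → ℕ}
    (k : ℕ) (hM : Tendsto M l atTop) (hN_ge : ∀ i, M i * log (M i) ≤ N i)
    (hN_le : ∀ i, N i ≤ M i * log (M i) + 1) :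
    Tendsto (fun i ↦ ((M i).choose k : ℝ) * (1 - k / M i) ^ N i) l (𝓝 (1 / k !)) := by
  have h := ((tendsto_choose_div_pow_atTop k).comp hM).mul
    (tendsto_pow_mul_one_sub_div_pow k (tendsto_natCast_atTop_atTop.comp hM) hN_ge hN_le)
  rw [mul_one] at h
  refine h.congr' ?_
  filter_upwards [hM.eventually_gt_atTop 0] with i hi
  have : (M i : ℝ) ^ k ≠ 0 := by positivity
  simp only [Function.comp_apply]
  field_simp

theorem tendsto_sum_range_neg_one_pow_div_factorial :
    Tendsto (fun r ↦ ∑ k ∈ range r, (-1 : ℝ) ^ k / k !) atTop (𝓝 (exp (-1))) := by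
  rw [exp_eq_exp_ℝ]
  exact (NormedSpace.expSeries_div_hasSum_exp (-1 : ℝ)).tendsto_sum_nat

end Asymptotics

theorem kerDy_eq_zero_of_img_eq_univ {m : ℕ} (y : Fin (MM m)) (X Z : Str m)
    (hZ : img Z = univ) : kerDy m y X Z = 0 := by
  obtain ⟨i, -, hi⟩ := mem_image.mp (hZ ▸ mem_univ y : y ∈ img Z)
  refine prod_eq_zero (mem_univ i) ?_
  by_cases h : X i = y
  · simp [h, hi]
  · simp [h, hi, Ne.symm h]

theorem pr_dmass_img_eq_univ (m : ℕ) : pr (dmass m) {Z : Str m | img Z = univ} = 0 := by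
  refine sum_eq_zero fun Z _ ↦ Set.indicator_apply_eq_zero.mpr fun hZ ↦ ?_
  refine sum_eq_zero fun X _ ↦ ?_
  simp [kerD, kerDy_eq_zero_of_img_eq_univ _ X Z hZ]

theorem pr_umass_img_eq_univ (m : ℕ) :
    pr (umass m) {X : Str m | img X = univ} =
      #{X : Str m | img X = univ} / (MM m : ℝ) ^ NN m := by
  simp [pr, umass, Set.indicator_apply, sum_ite, div_eq_mul_inv]

theorem tendsto_MM : Tendsto MM atTop atTop :=
  tendsto_pow_atTop_atTop_of_one_lt one_lt_two

theorem MM_mul_log_MM (m : ℕ) : (MM m : ℝ) * log (MM m) = MM m * m * log 2 := by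
  rw [MM, Nat.cast_pow, log_pow, Nat.cast_ofNat, mul_assoc]

theorem MM_mul_log_le_NN (m : ℕ) : (MM m : ℝ) * log (MM m) ≤ NN m :=
  MM_mul_log_MM m ▸ Nat.le_ceil _

theorem NN_le_MM_mul_log_add_one (m : ℕ) : (NN m : ℝ) ≤ MM m * log (MM m) + 1 :=
  MM_mul_log_MM m ▸ (Nat.ceil_lt_add_one (by positivity)).le

theorem sum_range_le_pr_umass_img_eq_univ (m : ℕ) {r : ℕ} (hr : Odd r) :
    ∑ k ∈ range (r + 1), (-1) ^ k * ((MM m).choose k : ℝ) * (1 - k / MM m) ^ NN m ≤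
      pr (umass m) {X : Str m | img X = univ} := by
  have hM : (0 : ℝ) < MM m := Nat.cast_pos.mpr (Nat.two_pow_pos m)
  have h : ∑ k ∈ range (r + 1),
      (-1) ^ k * (((MM m).choose k * (MM m - k) ^ NN m : ℕ) : ℝ) ≤
      #{X : Str m | img X = univ} := by
    have :=
      sum_range_neg_one_pow_mul_choose_mul_pow_le_card (α := Fin (NN m)) (β := Fin (MM m)) hr
    simp only [Fintype.card_fin] at this
    exact_mod_cast this
  rw [pr_umass_img_eq_univ, le_div_iff₀ (by positivity), sum_mul]
  refine le_trans (le_of_eq (sum_congr rfl fun k _ ↦ ?_)) h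
  rcases le_or_gt k (MM m) with hk | hk
  · rw [one_sub_div hM.ne', div_pow, mul_assoc, div_mul_cancel₀ _ (pow_ne_zero _ hM.ne')]
    push_cast [Nat.cast_sub hk]
    ring
  · simp [Nat.choose_eq_zero_of_lt hk]

theorem eventually_exp_neg_one_sub_lt_pr_umass {ε : ℝ} (hε : 0 < ε) :
    ∀ᶠ m in atTop, exp (-1) - ε < pr (umass m) {X : Str m | img X = univ} := by
  obtain ⟨r₀, hr₀⟩ := eventually_atTop.mp <|
    tendsto_sum_range_neg_one_pow_div_factorial.eventually_const_lt (sub_lt_self _ (half_pos hε))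
  set r := 2 * r₀ + 1
  have hsum : Tendsto
      (fun m ↦ ∑ k ∈ range (r + 1),
        (-1) ^ k * ((MM m).choose k : ℝ) * (1 - k / MM m) ^ NN m)
      atTop (𝓝 (∑ k ∈ range (r + 1), (-1 : ℝ) ^ k / k !)) := by
    refine tendsto_finsetSum _ fun k _ ↦ ?_
    simp_rw [mul_assoc, div_eq_mul_one_div ((-1 : ℝ) ^ k)]
    exact (tendsto_choose_mul_one_sub_div_pow k tendsto_MM MM_mul_log_le_NN
      NN_le_MM_mul_log_add_one).const_mul _
  filter_upwards [hsum.eventually_const_lt (sub_lt_self _ (half_pos hε))] with m hm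
  have hbonf := sum_range_le_pr_umass_img_eq_univ m (odd_two_mul_add_one r₀)
  linarith [hr₀ (r + 1) (by omega)]

/-- `D` gives probability `0` to surjective strings, and for every `ε > 0`,
for all sufficiently large `m`, `Pr_U[f_Surj = 1] ≥ 1/e − ε`; consequently
`Pr_U[f_Surj = 1] − Pr_D[f_Surj = 1] ≥ 1/e − ε`. -/
theorem stmt3 :
    (∀ m : ℕ, 1 ≤ m → pr (dmass m) {X : Str m | img X = Finset.univ} = 0) ∧
    (∀ ε : ℝ, 0 < ε → ∃ m0 : ℕ, ∀ m : ℕ, m0 ≤ m →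
      1 / Real.exp 1 - ε ≤ pr (umass m) {X : Str m | img X = Finset.univ} ∧
      1 / Real.exp 1 - ε ≤
        pr (umass m) {X : Str m | img X = Finset.univ} -
          pr (dmass m) {X : Str m | img X = Finset.univ}) := by
  refine ⟨fun m _ ↦ pr_dmass_img_eq_univ m, fun ε hε ↦ ?_⟩
  obtain ⟨m0, hm0⟩ := eventually_atTop.mp (eventually_exp_neg_one_sub_lt_pr_umass hε)
  refine ⟨m0, fun m hm ↦ ?_⟩
  rw [pr_dmass_img_eq_univ, sub_zero, one_div, ← exp_neg]
  exact ⟨(hm0 m hm).le, (hm0 m hm).le⟩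

end
end GLN
end

section
/- For every k ≤ M/2, the distribution D, viewed via the bit encoding as a distribution on {0,1}^n with n = Nm, is 2k/M-almost k-wise independent: every Boolean k-term C satisfies 1 − 2k/M ≤ Pr_D[C]/2^{−k} ≤ 1 + 2k/M. -/
/-!
Resampling the coordinates equal to `y` of a uniform string gives, coordinatewise, the uniform
distribution `ν_y` on `[M] ∖ {y}`, so `D` is the uniform mixture over `y` of the product measures
`ν_y^N`. A `k`-term is a box `∏ᵢ Aᵢ` that is proper on a set `s` of at most `k` coordinates, with
`|Aᵢ|/M = 2^{-tᵢ}` and `∑ tᵢ = k`. Under `ν_y` the factor `Aᵢ` has mass `(|Aᵢ| - [y ∈ Aᵢ])/(M-1)`.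
This is at most `(|Aᵢ|/M) · M/(M-1)`, giving `Pr_D[C] ≤ 2^{-k} (M/(M-1))^k ≤ 2^{-k} (1 + 2k/M)`;
and at least `(|Aᵢ|/M)(1 - [y ∈ Aᵢ]/|Aᵢ|)`, and averaging `1 - ∑_{i ∈ s} [y ∈ Aᵢ]/|Aᵢ|` over
`y` gives `Pr_D[C] ≥ 2^{-k} (1 - |s|/M) ≥ 2^{-k} (1 - 2k/M)`.
-/

open Finset

theorem one_sub_sum_le_prod_one_sub {R ι : Type*} [CommRing R] [LinearOrder R]
    [IsStrictOrderedRing R] (s : Finset ι) {t : ι → R} (h0 : ∀ i ∈ s, 0 ≤ t i)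
    (h1 : ∀ i ∈ s, t i ≤ 1) : 1 - ∑ i ∈ s, t i ≤ ∏ i ∈ s, (1 - t i) := by
  classical
  induction s using Finset.induction with
  | empty => simp
  | insert a s ha ih =>
    simp only [forall_mem_insert] at h0 h1
    rw [prod_insert ha, sum_insert ha]
    have hprod := ih h0.2 h1.2
    have hsum : 0 ≤ ∑ i ∈ s, t i := sum_nonneg h0.2
    nlinarith [mul_le_mul_of_nonneg_left hprod (sub_nonneg.2 h1.1), mul_nonneg h0.1 hsum]

theorem div_sub_one_pow_le {M : ℝ} {k : ℕ} (hM : 1 < M) (hk : 2 * k ≤ M) :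
    (M / (M - 1)) ^ k ≤ 1 + 2 * k / M := by
  have hM0 : 0 < M := by linarith
  have hx : (k : ℝ) / M ≤ 1 / 2 := by rw [div_le_iff₀ hM0]; linarith
  have hx0 : 0 ≤ (k : ℝ) / M := by positivity
  have hbern : 1 - k / M ≤ (1 - 1 / M) ^ k := by
    have h1M : 1 / M ≤ 2 := (div_le_one hM0 |>.2 hM.le).trans one_le_two
    calc 1 - k / M = 1 + k * -(1 / M) := by ring
      _ ≤ (1 + -(1 / M)) ^ k := one_add_mul_le_pow (neg_le_neg h1M) k
      _ = (1 - 1 / M) ^ k := by ring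
  calc (M / (M - 1)) ^ k = ((1 - 1 / M) ^ k)⁻¹ := by
        rw [← inv_pow, one_sub_div hM0.ne', inv_div]
    _ ≤ (1 - k / M)⁻¹ := inv_anti₀ (by linarith) hbern
    _ ≤ 1 + 2 * k / M := by
        rw [inv_le_iff_one_le_mul₀ (by linarith), mul_div_assoc]
        nlinarith [mul_nonneg hx0 (by linarith : (0 : ℝ) ≤ 1 / 2 - k / M)]

theorem card_filter_forall_mem_eq {ι β : Type*} [Fintype ι] [DecidableEq ι] [Fintype β]
    [DecidableEq β] (T : Finset ι) (c : ι → β) :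
    #{f : ι → β | ∀ j ∈ T, f j = c j} = Fintype.card β ^ (Fintype.card ι - #T) := by
  have : ({f : ι → β | ∀ j ∈ T, f j = c j} : Finset (ι → β)) =
      Fintype.piFinset fun j => if j ∈ T then {c j} else univ := by
    ext f
    simp only [mem_filter, mem_univ, true_and, Fintype.mem_piFinset]
    refine forall_congr' fun j => ?_
    split_ifs <;> simp [*]
  simp only [this, Fintype.card_piFinset, apply_ite card, card_singleton, card_univ]
  rw [prod_ite, prod_const_one, one_mul, prod_const]
  simp [filter_not, card_sdiff]

theorem sum_card_row_eq_card {ι κ : Type*} [Fintype ι] [Fintype κ] [DecidableEq ι]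
    [DecidableEq κ] (V : Finset (ι × κ)) : ∑ i, #({j | (i, j) ∈ V} : Finset κ) = #V := by
  simp only [card_filter]
  rw [← Fintype.sum_prod_type' fun i j => if (i, j) ∈ V then 1 else 0, ← card_filter,
    filter_univ_mem]

noncomputable section AvoidMixture

variable {α ι : Type*} [Fintype α] [Fintype ι]

theorem prod_card_div_card_eq_prod {A : ι → Finset α} {s : Finset ι} (hα : 1 < Fintype.card α)
    (hs : ∀ i ∉ s, A i = univ) :
    ∏ i, (#(A i) : ℝ) / Fintype.card α = ∏ i ∈ s, (#(A i) : ℝ) / Fintype.card α :=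
  (prod_subset (subset_univ s) fun i _ hi => by
    rw [hs i hi, card_univ, div_self (by positivity)]).symm

variable [DecidableEq α]

/-- The uniform distribution `ν_y` on `α ∖ {y}`. -/
def avoidMass (y z : α) : ℝ := if z = y then 0 else 1 / ((Fintype.card α : ℝ) - 1)

def avoidMixture (Z : ι → α) : ℝ :=
  1 / (Fintype.card α : ℝ) * ∑ y, ∏ i, avoidMass y (Z i)

theorem sum_avoidMass (y : α) (A : Finset α) :
    ∑ z ∈ A, avoidMass y z =
      ((#A : ℝ) - if y ∈ A then 1 else 0) / ((Fintype.card α : ℝ) - 1) := by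
  have : ∀ z, avoidMass y z = 1 / ((Fintype.card α : ℝ) - 1) -
      if z = y then 1 / ((Fintype.card α : ℝ) - 1) else 0 := by
    intro z; unfold avoidMass; split_ifs <;> ring
  rw [sum_congr rfl fun z _ => this z, sum_sub_distrib, sum_const, sum_ite_eq', nsmul_eq_mul]
  split_ifs <;> ring

theorem sum_avoidMass_univ (hα : 1 < Fintype.card α) (y : α) : ∑ z, avoidMass y z = 1 := by
  have : (1 : ℝ) < Fintype.card α := by exact_mod_cast hα
  rw [sum_avoidMass, if_pos (mem_univ y), card_univ, div_self (by linarith)]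

theorem avoidMass_nonneg (hα : 1 < Fintype.card α) (y z : α) : 0 ≤ avoidMass y z := by
  have : (1 : ℝ) < Fintype.card α := by exact_mod_cast hα
  unfold avoidMass; split_ifs
  · rfl
  · exact div_nonneg zero_le_one (by linarith)

theorem sum_uniform_mul_resample (hα : 1 < Fintype.card α) (y z : α) :
    ∑ x, 1 / (Fintype.card α : ℝ) *
        (if x = y then avoidMass y z else if z = x then 1 else 0) = avoidMass y z := by
  have hM : (1 : ℝ) < Fintype.card α := by exact_mod_cast hα
  rw [← mul_sum]
  by_cases hz : z = y
  · subst hz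
    rw [avoidMass, if_pos rfl]
    refine mul_eq_zero_of_right _ (sum_eq_zero fun x _ => ?_)
    simp only [@eq_comm _ z x]
    split_ifs <;> rfl
  · have : ∀ x, (if x = y then avoidMass y z else if z = x then (1 : ℝ) else 0) =
        (if x = y then avoidMass y z else 0) + if x = z then 1 else 0 := by
      intro x
      by_cases hx : x = y
      · simp [hx, Ne.symm hz]
      · simp [hx, eq_comm]
    rw [sum_congr rfl fun x _ => this x, sum_add_distrib, sum_ite_eq', sum_ite_eq']
    simp only [mem_univ, if_true, avoidMass, if_neg hz]
    have : (Fintype.card α : ℝ) - 1 ≠ 0 := by linarith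
    field_simp
    ring

theorem sum_avoidMixture_piFinset [DecidableEq ι] (A : ι → Finset α) :
    ∑ Z ∈ Fintype.piFinset A, avoidMixture Z =
      1 / (Fintype.card α : ℝ) * ∑ y, ∏ i, ∑ z ∈ A i, avoidMass y z := by
  simp only [avoidMixture, ← mul_sum, prod_univ_sum]
  rw [sum_comm]

theorem card_div_mul_one_sub_le_sum_avoidMass (hα : 1 < Fintype.card α) (y : α)
    (A : Finset α) :
    (#A : ℝ) / Fintype.card α * (1 - if y ∈ A then 1 / (#A : ℝ) else 0) ≤
      ∑ z ∈ A, avoidMass y z := by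
  have hM : (1 : ℝ) < Fintype.card α := by exact_mod_cast hα
  rw [sum_avoidMass]
  split_ifs with hy
  · have hA : (1 : ℝ) ≤ #A := by exact_mod_cast card_pos.2 ⟨y, hy⟩
    have hA0 : (#A : ℝ) ≠ 0 := by linarith
    rw [show (#A : ℝ) / Fintype.card α * (1 - 1 / #A) = (#A - 1) / Fintype.card α by
      field_simp]
    exact div_le_div_of_nonneg_left (by linarith) (by linarith) (by linarith)
  · rw [sub_zero, mul_one, sub_zero]
    exact div_le_div_of_nonneg_left (by positivity) (by linarith) (by linarith)

variable {A : ι → Finset α} {s : Finset ι}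

theorem prod_sum_avoidMass_eq_prod (hα : 1 < Fintype.card α) (hs : ∀ i ∉ s, A i = univ)
    (y : α) : ∏ i, ∑ z ∈ A i, avoidMass y z = ∏ i ∈ s, ∑ z ∈ A i, avoidMass y z :=
  (prod_subset (subset_univ s) fun i _ hi => by rw [hs i hi, sum_avoidMass_univ hα]).symm

theorem prod_sum_avoidMass_le (hα : 1 < Fintype.card α) (hs : ∀ i ∉ s, A i = univ) (y : α) :
    ∏ i, ∑ z ∈ A i, avoidMass y z ≤ (∏ i, (#(A i) : ℝ) / Fintype.card α) *
      ((Fintype.card α : ℝ) / (Fintype.card α - 1)) ^ #s := by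
  have hM : (1 : ℝ) < Fintype.card α := by exact_mod_cast hα
  rw [prod_sum_avoidMass_eq_prod hα hs, prod_card_div_card_eq_prod hα hs, ← prod_const,
    ← prod_mul_distrib]
  refine prod_le_prod (fun i _ => sum_nonneg fun z _ => avoidMass_nonneg hα y z) fun i _ => ?_
  have hM1 : (Fintype.card α : ℝ) - 1 ≠ 0 := by linarith
  calc _ = ((#(A i) : ℝ) - if y ∈ A i then 1 else 0) / (Fintype.card α - 1) := sum_avoidMass y _
    _ ≤ (#(A i) : ℝ) / (Fintype.card α - 1) := by
        gcongr
        split_ifs <;> norm_num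
    _ = _ := by field_simp

theorem prod_mul_one_sub_le_prod_sum_avoidMass (hα : 1 < Fintype.card α)
    (hs : ∀ i ∉ s, A i = univ) (y : α) :
    (∏ i, (#(A i) : ℝ) / Fintype.card α) *
        (1 - ∑ i ∈ s, if y ∈ A i then 1 / (#(A i) : ℝ) else 0) ≤
      ∏ i, ∑ z ∈ A i, avoidMass y z := by
  have he : ∀ i ∈ s, (0 : ℝ) ≤ if y ∈ A i then 1 / (#(A i) : ℝ) else 0 := by
    intro i _; split_ifs <;> positivity
  have he1 : ∀ i ∈ s, (if y ∈ A i then 1 / (#(A i) : ℝ) else 0) ≤ 1 := by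
    intro i _
    split_ifs with hy
    · exact div_le_one_of_le₀ (by exact_mod_cast card_pos.2 ⟨y, hy⟩) (by positivity)
    · exact zero_le_one
  rw [prod_sum_avoidMass_eq_prod hα hs, prod_card_div_card_eq_prod hα hs]
  calc _ ≤ (∏ i ∈ s, (#(A i) : ℝ) / Fintype.card α) *
        ∏ i ∈ s, (1 - if y ∈ A i then 1 / (#(A i) : ℝ) else 0) := by
        exact mul_le_mul_of_nonneg_left (one_sub_sum_le_prod_one_sub s he he1)
          (prod_nonneg fun i _ => by positivity)
    _ ≤ _ := by
        rw [← prod_mul_distrib]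
        refine prod_le_prod (fun i hi => ?_) fun i _ =>
          card_div_mul_one_sub_le_sum_avoidMass hα y (A i)
        exact mul_nonneg (by positivity) (sub_nonneg.2 (he1 i hi))

theorem sum_avoidMixture_piFinset_le [DecidableEq ι] (hα : 1 < Fintype.card α)
    (hs : ∀ i ∉ s, A i = univ) :
    ∑ Z ∈ Fintype.piFinset A, avoidMixture Z ≤ (∏ i, (#(A i) : ℝ) / Fintype.card α) *
      ((Fintype.card α : ℝ) / (Fintype.card α - 1)) ^ #s := by
  have hM : (0 : ℝ) < Fintype.card α := by positivity
  rw [sum_avoidMixture_piFinset]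
  calc _ ≤ 1 / (Fintype.card α : ℝ) * ∑ _y : α, (∏ i, (#(A i) : ℝ) / Fintype.card α) *
        ((Fintype.card α : ℝ) / (Fintype.card α - 1)) ^ #s := by
        gcongr with y
        exact prod_sum_avoidMass_le hα hs y
    _ = _ := by
        rw [sum_const, card_univ, nsmul_eq_mul, ← mul_assoc, one_div_mul_cancel hM.ne', one_mul]

theorem le_sum_avoidMixture_piFinset [DecidableEq ι] (hα : 1 < Fintype.card α)
    (hs : ∀ i ∉ s, A i = univ) :
    (∏ i, (#(A i) : ℝ) / Fintype.card α) * (1 - #s / Fintype.card α) ≤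
      ∑ Z ∈ Fintype.piFinset A, avoidMixture Z := by
  have hM : (0 : ℝ) < Fintype.card α := by positivity
  have hmass : ∀ i, ∑ y : α, (if y ∈ A i then 1 / (#(A i) : ℝ) else 0) ≤ 1 := by
    intro i
    rw [sum_ite_mem, univ_inter, sum_const, nsmul_eq_mul]
    by_cases h : (#(A i) : ℝ) = 0 <;> simp [h]
  have hcover : ∑ y : α, ∑ i ∈ s, (if y ∈ A i then 1 / (#(A i) : ℝ) else 0) ≤ #s := by
    rw [sum_comm, ← nsmul_one, ← sum_const]
    exact sum_le_sum fun i _ => hmass i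
  have hP : 0 ≤ ∏ i, (#(A i) : ℝ) / Fintype.card α := prod_nonneg fun i _ => by positivity
  rw [sum_avoidMixture_piFinset]
  calc _ ≤ 1 / (Fintype.card α : ℝ) * ∑ y, (∏ i, (#(A i) : ℝ) / Fintype.card α) *
        (1 - ∑ i ∈ s, if y ∈ A i then 1 / (#(A i) : ℝ) else 0) := by
        rw [← mul_sum, sum_sub_distrib, sum_const, card_univ, nsmul_eq_mul, mul_one,
          ← mul_assoc, mul_comm (1 / _), mul_assoc, one_div_mul_eq_div, sub_div,
          div_self hM.ne']
        gcongr
    _ ≤ _ := by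
        gcongr with y
        exact prod_mul_one_sub_le_prod_sum_avoidMass hα hs y

end AvoidMixture

theorem card_filter_testBit_eq (m : ℕ) (T : Finset (Fin m)) (b : Fin m → Bool) :
    #{v : Fin (2 ^ m) | ∀ j ∈ T, v.val.testBit j = b j} = 2 ^ (m - #T) := by
  have hinj : Function.Injective fun (v : Fin (2 ^ m)) (j : Fin m) => v.val.testBit j := by
    intro v w h
    refine Fin.ext (Nat.eq_of_testBit_eq fun j => ?_)
    by_cases hj : j < m
    · exact congrFun h ⟨j, hj⟩
    · have hpow : 2 ^ m ≤ 2 ^ j := Nat.pow_le_pow_right two_pos (not_lt.1 hj)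
      rw [Nat.testBit_eq_false_of_lt (v.2.trans_le hpow),
        Nat.testBit_eq_false_of_lt (w.2.trans_le hpow)]
  let e : Fin (2 ^ m) ≃ (Fin m → Bool) :=
    Equiv.ofBijective _ ((Fintype.bijective_iff_injective_and_card _).2 ⟨hinj, by simp⟩)
  refine (card_equiv e fun v => ?_).trans ((card_filter_forall_mem_eq T b).trans ?_) <;>
    simp [e]

namespace GLN

theorem one_lt_card_fin_MM {m : ℕ} (hm : 1 ≤ m) : 1 < Fintype.card (Fin (MM m)) := by
  rw [Fintype.card_fin, MM]
  exact Nat.one_lt_two_pow (by omega)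

theorem dmass_eq_avoidMixture {m : ℕ} (hm : 1 ≤ m) : dmass m = avoidMixture := by
  have hα := one_lt_card_fin_MM hm
  set c : ℝ := 1 / (Fintype.card (Fin (MM m)) : ℝ)
  have hX : ∀ (Z X : Str m), umass m X * kerD m X Z = c * ∑ y, ∏ i,
      c * (if X i = y then avoidMass y (Z i) else if Z i = X i then 1 else 0) := by
    intro Z X
    simp only [c, umass, kerD, kerDy, avoidMass, Fintype.card_fin, prod_mul_distrib, prod_const,
      card_univ, mul_sum]
    refine sum_congr rfl fun y _ => ?_
    rw [one_div_pow]
    ring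
  funext Z
  rw [dmass, sum_congr rfl fun X _ => hX Z X, ← mul_sum, sum_comm]
  refine congrArg (c * ·) (sum_congr rfl fun y _ => ?_)
  rw [← Fintype.prod_sum fun i x =>
    c * if x = y then avoidMass y (Z i) else if Z i = x then 1 else 0]
  exact prod_congr rfl fun i _ => sum_uniform_mul_resample hα y (Z i)

noncomputable def bitPattern {m : ℕ} (V : Finset (Fin (NN m) × Fin m))
    (a : Fin (NN m) × Fin m → Bool) (i : Fin (NN m)) : Finset (Fin (MM m)) :=
  {v | ∀ j ∈ ({j | (i, j) ∈ V} : Finset (Fin m)), v.val.testBit j = a (i, j)}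

theorem setOf_bit_eq_piFinset {m : ℕ} (V : Finset (Fin (NN m) × Fin m))
    (a : Fin (NN m) × Fin m → Bool) :
    {X : Str m | ∀ q ∈ V, bit X q = a q} = Fintype.piFinset (bitPattern V a) := by
  ext X
  simp [bitPattern, bit]

theorem pr_coe_finset {m : ℕ} (μ : Str m → ℝ) (s : Finset (Str m)) :
    pr μ ↑s = ∑ X ∈ s, μ X :=
  sum_indicator_subset μ (subset_univ s)

theorem card_bitPattern_div {m : ℕ} (V : Finset (Fin (NN m) × Fin m))
    (a : Fin (NN m) × Fin m → Bool) (i : Fin (NN m)) :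
    (#(bitPattern V a i) : ℝ) / Fintype.card (Fin (MM m)) = 2⁻¹ ^ #{j | (i, j) ∈ V} := by
  have hcard : #(bitPattern V a i) = 2 ^ (m - #{j | (i, j) ∈ V}) :=
    card_filter_testBit_eq m _ _
  have hle : #({j | (i, j) ∈ V} : Finset (Fin m)) ≤ m := card_le_univ _ |>.trans_eq (by simp)
  rw [hcard, Fintype.card_fin, MM, Nat.cast_pow, Nat.cast_pow, Nat.cast_ofNat,
    pow_sub₀ _ two_ne_zero hle, inv_pow]
  field_simp

theorem bitPattern_eq_univ {m : ℕ} {V : Finset (Fin (NN m) × Fin m)}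
    (a : Fin (NN m) × Fin m → Bool) {i : Fin (NN m)} (hi : i ∉ V.image Prod.fst) :
    bitPattern V a i = univ := by
  refine eq_univ_of_forall fun v => mem_filter.2 ⟨mem_univ v, fun j hj => ?_⟩
  exact absurd (mem_image_of_mem Prod.fst (mem_filter.1 hj).2) hi

theorem prod_card_bitPattern_div {m : ℕ} (V : Finset (Fin (NN m) × Fin m))
    (a : Fin (NN m) × Fin m → Bool) :
    ∏ i, (#(bitPattern V a i) : ℝ) / Fintype.card (Fin (MM m)) = 2⁻¹ ^ #V := by
  simp only [card_bitPattern_div, prod_pow_eq_pow_sum, sum_card_row_eq_card]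

/-- for `k ≤ M/2`, the distribution `D`, viewed through the bit encoding, is
`2k/M`-almost `k`-wise independent: every Boolean `k`-term `C` (a conjunction fixing `k`
distinct bits of the encoding) satisfies `1 − 2k/M ≤ Pr_D[C]/2^{−k} ≤ 1 + 2k/M`. -/
theorem stmt6 (m k : ℕ) (hm : 1 ≤ m) (hk : 2 * k ≤ MM m)
    (V : Finset (Fin (NN m) × Fin m)) (hV : V.card = k)
    (a : Fin (NN m) × Fin m → Bool) :
    1 - 2 * (k : ℝ) / (MM m : ℝ) ≤
      pr (dmass m) {X : Str m | ∀ q ∈ V, bit X q = a q} / (2 : ℝ)⁻¹ ^ k ∧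
    pr (dmass m) {X : Str m | ∀ q ∈ V, bit X q = a q} / (2 : ℝ)⁻¹ ^ k ≤
      1 + 2 * (k : ℝ) / (MM m : ℝ) := by
  have hα := one_lt_card_fin_MM hm
  have hs : ∀ i ∉ V.image Prod.fst, bitPattern V a i = univ := fun _ => bitPattern_eq_univ a
  have hsk : #(V.image Prod.fst) ≤ k := hV ▸ card_image_le
  have hM : (Fintype.card (Fin (MM m)) : ℝ) = MM m := by simp
  have hM1 : (1 : ℝ) < MM m := by rw [← hM]; exact_mod_cast hα
  have hkM : 2 * (k : ℝ) ≤ MM m := by exact_mod_cast hk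
  have hlower := le_sum_avoidMixture_piFinset hα hs
  have hupper := sum_avoidMixture_piFinset_le hα hs
  rw [prod_card_bitPattern_div, hV, hM] at hlower hupper
  rw [setOf_bit_eq_piFinset, pr_coe_finset, dmass_eq_avoidMixture hm,
    le_div_iff₀ (by positivity), div_le_iff₀ (by positivity)]
  constructor
  · refine le_trans ?_ hlower
    rw [mul_comm]
    gcongr
    have : (#(V.image Prod.fst) : ℝ) ≤ k := by exact_mod_cast hsk
    linarith
  · refine hupper.trans ?_
    rw [mul_comm]
    gcongr
    calc _ ≤ ((MM m : ℝ) / (MM m - 1)) ^ k := by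
          gcongr
          rw [le_div_iff₀ (by linarith)]
          linarith
      _ ≤ _ := div_sub_one_pow_le hM1 hkM

end GLN
end

section
/- Let X ∈ [M]^N satisfy |Im(X)| = M − 1 (so f_Surj(X) = 0), and let A(X) := {i ∈ [N] : ∃ j ≠ i with x_j = x_i}. Then |A(X)| ≥ N − M, and for every i ∈ A(X), changing only the coordinate x_i to the unique element of [M]∖Im(X) yields a string X^i with f_Surj(X^i) = 1. Hence the block-sensitivity satisfies bs_X(f_Surj) ≥ N − M (witnessed by the pairwise disjoint singleton blocks {i}, i ∈ A(X)). -/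
namespace GLN

noncomputable section

open Finset

/-- The block-sensitivity of `f` at `X`: the largest `t` for which there exist pairwise
disjoint blocks `B_1,…,B_t ⊆ [N]` and strings `X^{(1)},…,X^{(t)}`, with `X^{(j)}` agreeing
with `X` outside `B_j`, such that `f(X^{(j)}) ≠ f(X)` for every `j`. -/
def bs {m : ℕ} (f : Str m → Bool) (X : Str m) : ℕ :=
  sSup {t : ℕ | ∃ B : Fin t → Finset (Fin (NN m)),
    (∀ j j', j ≠ j' → Disjoint (B j) (B j')) ∧
    ∃ X' : Fin t → Str m, ∀ j, (∀ i, i ∉ B j → X' j i = X i) ∧ f (X' j) ≠ f X}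

section ImageUpdate

variable {α β : Type*} [Fintype α] [DecidableEq α] [DecidableEq β]

theorem card_sub_card_image_le_card_of_injOn_compl {X : α → β} {A : Finset α}
    (hinj : Set.InjOn X ↑Aᶜ) : Fintype.card α - (univ.image X).card ≤ A.card := by
  have hle : Aᶜ.card ≤ (univ.image X).card :=
    card_le_card_of_injOn X (fun a _ => mem_image_of_mem X (mem_univ a)) hinj
  have := card_add_card_compl A
  omega

theorem image_update_of_eq_of_ne {X : α → β} {i j : α} (hji : j ≠ i)
    (hX : X j = X i) (y : β) :
    univ.image (Function.update X i y) = insert y (univ.image X) := by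
  ext z
  simp only [mem_image, mem_univ, true_and, mem_insert]
  constructor
  · rintro ⟨k, rfl⟩
    by_cases hk : k = i
    · subst hk; simp
    · exact Or.inr ⟨k, (Function.update_of_ne hk y X).symm⟩
  · rintro (rfl | ⟨k, rfl⟩)
    · exact ⟨i, Function.update_self i z X⟩
    · by_cases hk : k = i
      · subst hk; exact ⟨j, by rw [Function.update_of_ne hji, hX]⟩
      · exact ⟨k, Function.update_of_ne hk y X⟩

end ImageUpdate

theorem Finset.insert_eq_univ_of_card_eq_pred {β : Type*} [Fintype β] [DecidableEq β]
    {s : Finset β} (hs : s.card = Fintype.card β - 1) {y : β} (hy : y ∉ s) :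
    insert y s = univ := by
  have := Fintype.card_pos_iff.mpr ⟨y⟩
  apply eq_univ_of_card
  rw [card_insert_of_notMem hy, hs]
  omega

theorem card_le_of_pairwise_disjoint_nonempty {α : Type*} [Fintype α] {t : ℕ}
    {B : Fin t → Finset α} (hdisj : ∀ j j', j ≠ j' → Disjoint (B j) (B j'))
    (hne : ∀ j, (B j).Nonempty) : t ≤ Fintype.card α := by
  choose c hc using hne
  have hinj : Function.Injective c := fun j j' h => by
    by_contra hjj'
    exact disjoint_left.mp (hdisj j j' hjj') (hc j) (h ▸ hc j')
  simpa using Fintype.card_le_of_injective c hinj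

section BlockSensitivity

variable {m : ℕ} (f : Str m → Bool) (X : Str m)

theorem bddAbove_bs_set :
    BddAbove {t : ℕ | ∃ B : Fin t → Finset (Fin (NN m)),
      (∀ j j', j ≠ j' → Disjoint (B j) (B j')) ∧
      ∃ X' : Fin t → Str m, ∀ j, (∀ i, i ∉ B j → X' j i = X i) ∧ f (X' j) ≠ f X} := by
  refine ⟨NN m, ?_⟩
  rintro t ⟨B, hdisj, X', hX'⟩
  have hne : ∀ j, (B j).Nonempty := fun j => by
    by_contra hempty
    rw [not_nonempty_iff_eq_empty] at hempty
    exact (hX' j).2 (congrArg f (funext fun i => (hX' j).1 i (by simp [hempty])))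
  simpa using card_le_of_pairwise_disjoint_nonempty hdisj hne

/-- Distinct sensitive coordinates give disjoint singleton blocks. -/
theorem card_le_bs (S : Finset (Fin (NN m)))
    (hS : ∀ i ∈ S, ∃ Y : Str m, (∀ k, k ≠ i → Y k = X k) ∧ f Y ≠ f X) :
    S.card ≤ bs f X := by
  choose Y hY using hS
  let e := S.orderEmbOfFin rfl
  refine le_csSup (bddAbove_bs_set f X)
    ⟨fun j => {e j}, fun j j' hjj' => ?_, fun j => Y (e j) (S.orderEmbOfFin_mem rfl j),
      fun j => ⟨fun i hi => (hY _ _).1 i (by simpa using hi), (hY _ _).2⟩⟩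
  simpa using hjj'

end BlockSensitivity

theorem stmt13_general (m : ℕ) (X : Str m) (hX : (img X).card = MM m - 1)
    (A : Finset (Fin (NN m)))
    (hA : A = Finset.univ.filter fun i => ∃ j, j ≠ i ∧ X j = X i) :
    NN m - MM m ≤ A.card ∧
    (∀ i ∈ A, ∀ y : Fin (MM m), y ∉ img X →
      fSurjB m (Function.update X i y) = true) ∧
    NN m - MM m ≤ bs (fSurjB m) X := by
  have hM : 1 ≤ MM m := Nat.one_le_two_pow
  have hX' : (img X).card = Fintype.card (Fin (MM m)) - 1 := by simpa using hX
  have hinj : Set.InjOn X ↑Aᶜ := fun a ha b _ hab => by_contra fun hne =>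
    (mem_compl.mp ha) (hA ▸ mem_filter.mpr ⟨mem_univ a, b, Ne.symm hne, hab.symm⟩)
  have hcard : NN m - MM m ≤ A.card := by
    have := card_sub_card_image_le_card_of_injOn_compl hinj
    rw [Fintype.card_fin, ← img, hX] at this
    omega
  have hsurj : ∀ i ∈ A, ∀ y : Fin (MM m), y ∉ img X →
      fSurjB m (Function.update X i y) = true := by
    intro i hi y hy
    obtain ⟨j, hji, hXj⟩ := (mem_filter.mp (hA ▸ hi)).2
    rw [fSurjB, decide_eq_true_iff, img, image_update_of_eq_of_ne hji hXj]
    exact Finset.insert_eq_univ_of_card_eq_pred hX' hy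
  have hne : img X ≠ univ :=
    (card_lt_iff_ne_univ (img X)).mp (by rw [hX, Fintype.card_fin]; omega)
  obtain ⟨y, hy⟩ : ∃ y, y ∉ img X := not_forall.mp (mt eq_univ_of_forall hne)
  have hnonsurj : fSurjB m X = false := decide_eq_false hne
  refine ⟨hcard, hsurj, hcard.trans (card_le_bs _ X A fun i hi => ?_)⟩
  exact ⟨Function.update X i y, fun k hk => Function.update_of_ne hk y X,
    by rw [hsurj i hi y hy, hnonsurj]; decide⟩

/-- if `|Im(X)| = M − 1` and `A(X) = {i : ∃ j ≠ i, x_j = x_i}`, then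
`|A(X)| ≥ N − M`; changing any single coordinate `x_i` with `i ∈ A(X)` to the missing
value yields a surjective string; hence `bs_X(f_Surj) ≥ N − M`. -/
theorem stmt13 (m : ℕ) (hm : 1 ≤ m) (X : Str m) (hX : (img X).card = MM m - 1)
    (A : Finset (Fin (NN m)))
    (hA : A = Finset.univ.filter fun i => ∃ j, j ≠ i ∧ X j = X i) :
    NN m - MM m ≤ A.card ∧
    (∀ i ∈ A, ∀ y : Fin (MM m), y ∉ img X →
      fSurjB m (Function.update X i y) = true) ∧
    NN m - MM m ≤ bs (fSurjB m) X :=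
  stmt13_general m X hX A hA

end
end GLN
end
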